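/- For every w ∈ H¹(Ω), the following estimate holds: ‖w·T∂_x w‖_{L₁(Ω)} ≤ ‖w‖_{L₂(Ω)}‖∇w‖_{L₂(Ω)}; consequently, for β ≠ 0, ‖w·T∂_x w‖_{L₁(Ω)} ≤ (|β|/(2μ))‖w‖²_{L₂(Ω)} + (μ/(2|β|))‖∇w‖²_{L₂(Ω)}. -/

import Mathlib

open MeasureTheory Real Filter Topology ENNReal

noncomputable section

/-- The unbounded horizontal strip `Ω = ℝ × (0,1)`. -/
def Strip : Set (ℝ × ℝ) := Set.univ ×ˢ Set.Ioo (0:ℝ) 1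

/-- The rectangle `Ω^N = (−2^N, 2^N) × (0,1)`. -/
def Rect (N : ℕ) : Set (ℝ × ℝ) := Set.Ioo (-(2:ℝ)^N) ((2:ℝ)^N) ×ˢ Set.Ioo (0:ℝ) 1

/-- The operator `T u (x,y) = ∫₀^y u(x,s) ds`. -/
def OpT (u : ℝ × ℝ → ℝ) : ℝ × ℝ → ℝ := fun z => ∫ s in (0:ℝ)..z.2, u (z.1, s)

/-- Membership in `L₂(O)`. -/
def MemL2 (O : Set (ℝ × ℝ)) (u : ℝ × ℝ → ℝ) : Prop := MemLp u 2 (volume.restrict O)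

/-- The `L₂(O)` norm, as an extended nonnegative real. -/
def L2norm (O : Set (ℝ × ℝ)) (u : ℝ × ℝ → ℝ) : ℝ≥0∞ := eLpNorm u 2 (volume.restrict O)

/-- Coordinate directions in `ℝ²`. -/
def basisVec : Fin 2 → ℝ × ℝ := ![(1,0),(0,1)]

/-- Smooth compactly supported test functions in the open set `O`. -/
def IsTestFun (O : Set (ℝ × ℝ)) (φ : ℝ × ℝ → ℝ) : Prop :=
  ContDiff ℝ (⊤ : ℕ∞) φ ∧ HasCompactSupport φ ∧ tsupport φ ⊆ O

/-- `v` is the weak `i`-th partial derivative of `u` on `O`. -/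
def IsWeakDeriv (O : Set (ℝ × ℝ)) (i : Fin 2) (u v : ℝ × ℝ → ℝ) : Prop :=
  ∀ φ : ℝ × ℝ → ℝ, IsTestFun O φ →
    ∫ z in O, u z * fderiv ℝ φ z (basisVec i) = - ∫ z in O, v z * φ z

open scoped Classical in
/-- A choice of weak `i`-th partial derivative of `u` on `O` (zero if none exists). -/
def wD (O : Set (ℝ × ℝ)) (i : Fin 2) (u : ℝ × ℝ → ℝ) : ℝ × ℝ → ℝ :=
  if h : ∃ v, IsWeakDeriv O i u v ∧ MemL2 O v then h.choose else 0

/-- Membership in the Sobolev space `H¹(O)`. -/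
def MemH1 (O : Set (ℝ × ℝ)) (u : ℝ × ℝ → ℝ) : Prop :=
  MemL2 O u ∧ ∀ i : Fin 2, ∃ v, IsWeakDeriv O i u v ∧ MemL2 O v

/-- Membership in the Sobolev space `H²(O)`. -/
def MemH2 (O : Set (ℝ × ℝ)) (u : ℝ × ℝ → ℝ) : Prop :=
  MemH1 O u ∧ ∀ i j : Fin 2, ∃ v, IsWeakDeriv O j (wD O i u) v ∧ MemL2 O v

/-- The squared `H¹(O)` norm. -/
def H1normSq (O : Set (ℝ × ℝ)) (u : ℝ × ℝ → ℝ) : ℝ≥0∞ :=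
  L2norm O u ^ 2 + L2norm O (wD O 0 u) ^ 2 + L2norm O (wD O 1 u) ^ 2

/-- The squared `H²(O)` norm. -/
def H2normSq (O : Set (ℝ × ℝ)) (u : ℝ × ℝ → ℝ) : ℝ≥0∞ :=
  H1normSq O u + ∑ i : Fin 2, ∑ j : Fin 2, L2norm O (wD O j (wD O i u)) ^ 2

/-- The squared Gagliardo (Sobolev–Slobodeckij) seminorm of order `s`. -/
def gagliardoSq (s : ℝ) (O : Set (ℝ × ℝ)) (u : ℝ × ℝ → ℝ) : ℝ≥0∞ :=
  ∫⁻ z in O, ∫⁻ w in O, ENNReal.ofReal ((u z - u w)^2 / ‖z - w‖ ^ (2 + 2*s))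

/-- Membership in the (fractional) Sobolev space `H^s(O)` for `0 ≤ s ≤ 2`,
defined via the Sobolev–Slobodeckij characterization (which for `p = 2` agrees with
the Bessel potential spaces). -/
def MemHs (s : ℝ) (O : Set (ℝ × ℝ)) (u : ℝ × ℝ → ℝ) : Prop :=
  MemL2 O u ∧
  (0 < s → s < 1 → gagliardoSq s O u < ⊤) ∧
  (1 ≤ s → MemH1 O u) ∧
  (1 < s → s < 2 → ∀ i : Fin 2, gagliardoSq (s-1) O (wD O i u) < ⊤) ∧
  (s = 2 → MemH2 O u)

/-- The squared `H^s(O)` norm for `0 ≤ s ≤ 2`. -/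
def HsNormSq (s : ℝ) (O : Set (ℝ × ℝ)) (u : ℝ × ℝ → ℝ) : ℝ≥0∞ :=
  if s ≤ 0 then L2norm O u ^ 2
  else if s < 1 then L2norm O u ^ 2 + gagliardoSq s O u
  else if s = 1 then H1normSq O u
  else if s < 2 then H1normSq O u + ∑ i : Fin 2, gagliardoSq (s-1) O (wD O i u)
  else H2normSq O u

/-- Vanishing (of the pointwise representative) on the boundary of `O`. -/
def ZeroOnBoundary (O : Set (ℝ × ℝ)) (u : ℝ × ℝ → ℝ) : Prop := ∀ z ∈ frontier O, u z = 0

/-- The space `H^s_D(O)`: `H^s(O)` for `s < 1/2`, with Dirichlet boundary condition for `s > 1/2`. -/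
def MemHsD (s : ℝ) (O : Set (ℝ × ℝ)) (u : ℝ × ℝ → ℝ) : Prop :=
  MemHs s O u ∧ (1/2 < s → ZeroOnBoundary O u)

/-- The weak Laplacian (via chosen weak derivatives). -/
def wLap (O : Set (ℝ × ℝ)) (u : ℝ × ℝ → ℝ) : ℝ × ℝ → ℝ :=
  fun z => wD O 0 (wD O 0 u) z + wD O 1 (wD O 1 u) z

/-- The energy `𝓔(u) = (1/2)∫_O u² dz`, as an extended nonnegative real. -/
def energy (O : Set (ℝ × ℝ)) (u : ℝ × ℝ → ℝ) : ℝ≥0∞ :=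
  (1/2) * ∫⁻ z in O, ENNReal.ofReal ((u z)^2)
lemma strip_meas : MeasurableSet Strip := MeasurableSet.univ.prod measurableSet_Ioo

lemma strip_prod : (volume : Measure (ℝ × ℝ)).restrict Strip
    = (volume : Measure ℝ).prod ((volume : Measure ℝ).restrict (Set.Ioo 0 1)) := by
  rw [Strip, Measure.volume_eq_prod, ← Measure.prod_restrict, Measure.restrict_univ]

def Gfun (g : ℝ × ℝ → ℝ) : ℝ × ℝ → ℝ := fun z =>
  (∫ s, (Set.Ioc (0:ℝ) z.2).indicator (fun s => g (z.1, s)) s)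
    - (∫ s, (Set.Ioc z.2 (0:ℝ)).indicator (fun s => g (z.1, s)) s)

lemma Gfun_eq (g : ℝ × ℝ → ℝ) (z : ℝ × ℝ) : Gfun g z = OpT g z := by
  rw [OpT, intervalIntegral, Gfun,
    integral_indicator measurableSet_Ioc, integral_indicator measurableSet_Ioc]

lemma Gfun_sm {g : ℝ × ℝ → ℝ} (hg : StronglyMeasurable g) : StronglyMeasurable (Gfun g) := by
  have hg2 : StronglyMeasurable fun p : (ℝ × ℝ) × ℝ => g (p.1.1, p.2) :=
    hg.comp_measurable (measurable_fst.fst.prodMk measurable_snd)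
  have h1 : StronglyMeasurable fun p : (ℝ × ℝ) × ℝ =>
      ({p : (ℝ × ℝ) × ℝ | 0 < p.2 ∧ p.2 ≤ p.1.2}.indicator (fun p => g (p.1.1, p.2))) p :=
    hg2.indicator ((measurableSet_lt measurable_const measurable_snd).inter
      (measurableSet_le measurable_snd measurable_fst.snd))
  have h2 : StronglyMeasurable fun p : (ℝ × ℝ) × ℝ =>
      ({p : (ℝ × ℝ) × ℝ | p.1.2 < p.2 ∧ p.2 ≤ 0}.indicator (fun p => g (p.1.1, p.2))) p :=
    hg2.indicator ((measurableSet_lt measurable_fst.snd measurable_snd).inter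
      (measurableSet_le measurable_snd measurable_const))
  have e1 : ∀ (z : ℝ × ℝ) (s : ℝ), (Set.Ioc (0:ℝ) z.2).indicator (fun s => g (z.1, s)) s
      = ({p : (ℝ × ℝ) × ℝ | 0 < p.2 ∧ p.2 ≤ p.1.2}.indicator (fun p => g (p.1.1, p.2))) (z, s) := by
    intro z s
    simp [Set.indicator_apply, Set.mem_Ioc]
  have e2 : ∀ (z : ℝ × ℝ) (s : ℝ), (Set.Ioc z.2 (0:ℝ)).indicator (fun s => g (z.1, s)) s
      = ({p : (ℝ × ℝ) × ℝ | p.1.2 < p.2 ∧ p.2 ≤ 0}.indicator (fun p => g (p.1.1, p.2))) (z, s) := by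
    intro z s
    simp [Set.indicator_apply, Set.mem_Ioc]
  have key := (h1.integral_prod_right' (ν := (volume : Measure ℝ))).sub
    (h2.integral_prod_right' (ν := (volume : Measure ℝ)))
  have : Gfun g = fun z => (∫ s, ({p : (ℝ × ℝ) × ℝ | 0 < p.2 ∧ p.2 ≤ p.1.2}.indicator
      (fun p => g (p.1.1, p.2))) (z, s)) - (∫ s, ({p : (ℝ × ℝ) × ℝ | p.1.2 < p.2 ∧ p.2 ≤ 0}.indicator
      (fun p => g (p.1.1, p.2))) (z, s)) := by
    funext z
    simp only [Gfun]
    rw [funext (e1 z), funext (e2 z)]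
  rw [this]
  exact key

lemma opT_ae {f g : ℝ × ℝ → ℝ} (h : f =ᵐ[(volume : Measure (ℝ×ℝ)).restrict Strip] g) :
    OpT f =ᵐ[(volume : Measure (ℝ×ℝ)).restrict Strip] OpT g := by
  rw [strip_prod] at h ⊢
  set ν := (volume : Measure ℝ).restrict (Set.Ioo 0 1) with hν
  have hae := Measure.ae_ae_of_ae_prod h
  set T : Set ℝ := {x | ¬ (fun x => ∀ᵐ s ∂ν, f (x, s) = g (x, s)) x} with hT
  have hTnull : volume T = 0 := hae
  have hsub : {z : ℝ × ℝ | ¬ OpT f z = OpT g z} ⊆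
      (T ×ˢ Set.univ) ∪ (Set.univ ×ˢ (Set.Ioo (0:ℝ) 1)ᶜ) := by
    rintro ⟨x, y⟩ hz
    by_contra hc
    simp only [Set.mem_union, Set.mem_prod, Set.mem_univ, and_true, true_and, not_or,
      Set.mem_compl_iff, not_not] at hc
    obtain ⟨hx, hy⟩ := hc
    apply hz
    have hx' : ∀ᵐ s ∂ν, f (x, s) = g (x, s) := by
      by_contra hcon; exact hx hcon
    have hsub2 : Set.Ioc (0:ℝ) y ⊆ Set.Ioo (0:ℝ) 1 :=
      fun s hs => ⟨hs.1, lt_of_le_of_lt hs.2 hy.2⟩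
    have hres : ∀ᵐ s ∂(volume : Measure ℝ).restrict (Set.Ioc (0:ℝ) y), f (x, s) = g (x, s) :=
      ae_restrict_of_ae_restrict_of_subset hsub2 hx'
    have : ∀ᵐ s ∂(volume : Measure ℝ), s ∈ Set.uIoc (0:ℝ) y → f (x, s) = g (x, s) := by
      rw [Set.uIoc_of_le hy.1.le]
      exact (ae_restrict_iff' measurableSet_Ioc).mp hres
    simpa only [OpT] using intervalIntegral.integral_congr_ae this
  refine measure_mono_null hsub (le_antisymm ?_ (by simp))
  refine le_trans (measure_union_le _ _) ?_
  rw [Measure.prod_prod, Measure.prod_prod, hTnull]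
  simp [hν, Measure.restrict_apply]

lemma conj22 : Real.HolderConjugate 2 2 := Real.HolderConjugate.two_two

lemma key_lintegral {g : ℝ × ℝ → ℝ} (hg : StronglyMeasurable g) :
    ∫⁻ z in Strip, (‖OpT g z‖₊ : ℝ≥0∞) ^ (2:ℝ) ≤ ∫⁻ z in Strip, (‖g z‖₊ : ℝ≥0∞) ^ (2:ℝ) := by
  set ν := (volume : Measure ℝ).restrict (Set.Ioo 0 1) with hν
  have hν1 : ν Set.univ = 1 := by
    simp [hν, Measure.restrict_apply, Real.volume_Ioo]
  have hgm : Measurable fun p : ℝ × ℝ => (‖g p‖₊ : ℝ≥0∞) ^ (2:ℝ) :=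
    (ENNReal.continuous_rpow_const.measurable).comp hg.measurable.enorm
  set F : ℝ → ℝ≥0∞ := fun x => ∫⁻ s, (‖g (x, s)‖₊ : ℝ≥0∞) ^ (2:ℝ) ∂ν with hF
  have hFm : Measurable F :=
    Measurable.lintegral_prod_right' (hgm.comp (measurable_fst.prodMk measurable_snd))
  -- pointwise bound on the strip
  have hpt : ∀ z ∈ Strip, (‖OpT g z‖₊ : ℝ≥0∞) ^ (2:ℝ) ≤ F z.1 := by
    rintro ⟨x, y⟩ hz
    have hy : y ∈ Set.Ioo (0:ℝ) 1 := hz.2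
    have h1 : (‖OpT g (x, y)‖₊ : ℝ≥0∞) ≤ ∫⁻ s in Set.Ioc (0:ℝ) y, ‖g (x, s)‖₊ := by
      have : OpT g (x, y) = ∫ s in Set.Ioc (0:ℝ) y, g (x, s) := by
        simp only [OpT]
        exact intervalIntegral.integral_of_le hy.1.le
      rw [this]
      exact enorm_integral_le_lintegral_enorm _
    have h2 : (∫⁻ s in Set.Ioc (0:ℝ) y, (‖g (x, s)‖₊ : ℝ≥0∞))
        ≤ ∫⁻ s, (‖g (x, s)‖₊ : ℝ≥0∞) ∂ν :=
      lintegral_mono_set (fun s hs => ⟨hs.1, lt_of_le_of_lt hs.2 hy.2⟩)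
    have h3 : (∫⁻ s, (‖g (x, s)‖₊ : ℝ≥0∞) ∂ν) ≤ (F x) ^ (1/2 : ℝ) := by
      have hold := ENNReal.lintegral_mul_le_Lp_mul_Lq ν conj22
        (f := fun s => (‖g (x, s)‖₊ : ℝ≥0∞)) (g := fun _ => 1)
        ((hg.measurable.comp (measurable_const.prodMk measurable_id)).enorm.aemeasurable)
        aemeasurable_const
      simp only [Pi.mul_apply, mul_one, ENNReal.one_rpow, lintegral_const, hν1, mul_one,
        ENNReal.one_rpow] at hold
      exact hold
    have h4 : (‖OpT g (x, y)‖₊ : ℝ≥0∞) ≤ (F x) ^ (1/2 : ℝ) :=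
      (h1.trans h2).trans h3
    calc (‖OpT g (x, y)‖₊ : ℝ≥0∞) ^ (2:ℝ) ≤ ((F x) ^ (1/2:ℝ)) ^ (2:ℝ) :=
          ENNReal.rpow_le_rpow h4 (by norm_num)
      _ = F x := by rw [← ENNReal.rpow_mul]; norm_num
  calc ∫⁻ z in Strip, (‖OpT g z‖₊ : ℝ≥0∞) ^ (2:ℝ)
      ≤ ∫⁻ z in Strip, F z.1 := setLIntegral_mono' strip_meas hpt
    _ = ∫⁻ x, F x := by
        rw [strip_prod,
          lintegral_prod (fun z : ℝ × ℝ => F z.1) ((hFm.comp measurable_fst).aemeasurable)]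
        simp [lintegral_const, hν1]
    _ = ∫⁻ z in Strip, (‖g z‖₊ : ℝ≥0∞) ^ (2:ℝ) := by
        rw [strip_prod, lintegral_prod _ hgm.aemeasurable]

/-- For every `w ∈ H¹(Ω)` (with weak gradient `(vx, vy) ∈ L₂(Ω)²`),
`‖w · T∂ₓw‖_{L₁(Ω)} ≤ ‖w‖_{L₂(Ω)} ‖∇w‖_{L₂(Ω)}`, and consequently, for `β ≠ 0`,
`‖w · T∂ₓw‖_{L₁(Ω)} ≤ (|β|/(2μ))‖w‖²_{L₂(Ω)} + (μ/(2|β|))‖∇w‖²_{L₂(Ω)}`. -/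
theorem stmt15 (μ β : ℝ) (hμ : 0 < μ) (hβ : β ≠ 0) (w vx vy : ℝ × ℝ → ℝ)
    (hw : MemL2 Strip w) (hvx : IsWeakDeriv Strip 0 w vx) (hvy : IsWeakDeriv Strip 1 w vy)
    (hvx2 : MemL2 Strip vx) (hvy2 : MemL2 Strip vy) :
    eLpNorm (fun z => w z * OpT vx z) 1 (volume.restrict Strip) ≤
        L2norm Strip w * (L2norm Strip vx ^ 2 + L2norm Strip vy ^ 2) ^ (1/2 : ℝ) ∧
    eLpNorm (fun z => w z * OpT vx z) 1 (volume.restrict Strip) ≤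
        ENNReal.ofReal (|β| / (2*μ)) * L2norm Strip w ^ 2 +
          ENNReal.ofReal (μ / (2*|β|)) * (L2norm Strip vx ^ 2 + L2norm Strip vy ^ 2) := by
  have hw' : MemLp w 2 (volume.restrict Strip) := hw
  have hvx' : MemLp vx 2 (volume.restrict Strip) := hvx2
  have hvy' : MemLp vy 2 (volume.restrict Strip) := hvy2
  obtain ⟨g, hg, hae⟩ : ∃ g, StronglyMeasurable g ∧ vx =ᵐ[volume.restrict Strip] g :=
    ⟨hvx'.1.mk vx, hvx'.1.stronglyMeasurable_mk, hvx'.1.ae_eq_mk⟩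
  set Tm := Gfun g with hTmdef
  have hTmsm : StronglyMeasurable Tm := Gfun_sm hg
  have hOpTg : OpT g = Tm := funext fun z => (Gfun_eq g z).symm
  have hTeq : OpT vx =ᵐ[volume.restrict Strip] Tm := hOpTg ▸ opT_ae hae
  have hL1 : eLpNorm (fun z => w z * OpT vx z) 1 (volume.restrict Strip)
      = eLpNorm (fun z => w z * Tm z) 1 (volume.restrict Strip) :=
    eLpNorm_congr_ae (hTeq.mono fun z hz => by simp only []; rw [hz])
  have e2 : ∀ f : ℝ × ℝ → ℝ, eLpNorm f 2 (volume.restrict Strip)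
      = (∫⁻ z, (‖f z‖₊ : ℝ≥0∞) ^ (2:ℝ) ∂(volume.restrict Strip)) ^ (1/2 : ℝ) := by
    intro f
    rw [eLpNorm_eq_lintegral_rpow_enorm_toReal two_ne_zero ENNReal.ofNat_ne_top]
    norm_num
    rfl
  have holder : eLpNorm (fun z => w z * Tm z) 1 (volume.restrict Strip)
      ≤ eLpNorm w 2 (volume.restrict Strip) * eLpNorm Tm 2 (volume.restrict Strip) := by
    rw [eLpNorm_one_eq_lintegral_enorm, e2 w, e2 Tm]
    calc ∫⁻ z, (‖w z * Tm z‖₊ : ℝ≥0∞) ∂(volume.restrict Strip)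
        = ∫⁻ z, ((fun z => (‖w z‖₊ : ℝ≥0∞)) * (fun z => (‖Tm z‖₊ : ℝ≥0∞))) z
            ∂(volume.restrict Strip) := by
          simp [nnnorm_mul, ENNReal.coe_mul]
      _ ≤ _ := ENNReal.lintegral_mul_le_Lp_mul_Lq _ conj22 hw'.1.enorm
            hTmsm.measurable.enorm.aemeasurable
  have hTm2 : eLpNorm Tm 2 (volume.restrict Strip) ≤ L2norm Strip vx := by
    rw [L2norm, e2 Tm, e2 vx]
    refine ENNReal.rpow_le_rpow ?_ (by norm_num)
    have h1 : ∫⁻ z, (‖Tm z‖₊ : ℝ≥0∞) ^ (2:ℝ) ∂(volume.restrict Strip)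
        = ∫⁻ z in Strip, (‖OpT g z‖₊ : ℝ≥0∞) ^ (2:ℝ) :=
      lintegral_congr fun z => by rw [← Gfun_eq]
    have h3 : ∫⁻ z in Strip, (‖g z‖₊ : ℝ≥0∞) ^ (2:ℝ)
        = ∫⁻ z, (‖vx z‖₊ : ℝ≥0∞) ^ (2:ℝ) ∂(volume.restrict Strip) :=
      lintegral_congr_ae (hae.mono fun z hz => by rw [hz]) |>.symm
    rw [h1, ← h3]
    exact key_lintegral hg
  set a := L2norm Strip w with hadef
  set b1 := L2norm Strip vx with hb1def
  set b2 := L2norm Strip vy with hb2def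
  set c := b1 ^ 2 + b2 ^ 2 with hcdef
  have hb : b1 ≤ c ^ (1/2 : ℝ) := by
    have h1 : b1 = (b1 ^ 2) ^ (1/2 : ℝ) := by
      rw [← ENNReal.rpow_natCast b1 2, ← ENNReal.rpow_mul]; norm_num
    rw [h1]
    exact ENNReal.rpow_le_rpow le_self_add (by norm_num)
  have part1 : eLpNorm (fun z => w z * OpT vx z) 1 (volume.restrict Strip)
      ≤ a * c ^ (1/2 : ℝ) := by
    rw [hL1]
    exact holder.trans (mul_le_mul' le_rfl (hTm2.trans hb))
  refine ⟨part1, part1.trans ?_⟩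
  -- finiteness
  have ha : a ≠ ⊤ := hw'.2.ne
  have hc : c ≠ ⊤ := ENNReal.add_ne_top.mpr
    ⟨ENNReal.pow_ne_top hvx'.2.ne, ENNReal.pow_ne_top hvy'.2.ne⟩
  have hbb : 0 < |β| := abs_pos.mpr hβ
  have hk1 : (0:ℝ) ≤ |β| / (2*μ) := by positivity
  have hk2 : (0:ℝ) ≤ μ / (2*|β|) := by positivity
  have hfin1 : a * c ^ (1/2 : ℝ) ≠ ⊤ :=
    ENNReal.mul_ne_top ha (ENNReal.rpow_ne_top_of_nonneg (by norm_num) hc)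
  have hfin2 : ENNReal.ofReal (|β| / (2*μ)) * a ^ 2 + ENNReal.ofReal (μ / (2*|β|)) * c ≠ ⊤ :=
    ENNReal.add_ne_top.mpr ⟨ENNReal.mul_ne_top ENNReal.ofReal_ne_top (ENNReal.pow_ne_top ha),
      ENNReal.mul_ne_top ENNReal.ofReal_ne_top hc⟩
  refine (ENNReal.toReal_le_toReal hfin1 hfin2).mp ?_
  rw [ENNReal.toReal_mul, ENNReal.toReal_add (ENNReal.mul_ne_top ENNReal.ofReal_ne_top
      (ENNReal.pow_ne_top ha)) (ENNReal.mul_ne_top ENNReal.ofReal_ne_top hc),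
    ENNReal.toReal_mul, ENNReal.toReal_mul, ENNReal.toReal_ofReal hk1,
    ENNReal.toReal_ofReal hk2, ENNReal.toReal_pow, ← ENNReal.toReal_rpow]
  set A := a.toReal with hA
  set C := c.toReal with hC
  have hA0 : 0 ≤ A := ENNReal.toReal_nonneg
  have hC0 : 0 ≤ C := ENNReal.toReal_nonneg
  set t := C ^ (1/2 : ℝ) with ht
  have ht0 : 0 ≤ t := Real.rpow_nonneg hC0 _
  have ht2 : t ^ 2 = C := by
    rw [ht, ← Real.rpow_natCast (C ^ ((1:ℝ)/2)) 2, ← Real.rpow_mul hC0]; norm_num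
  have h2 : (0:ℝ) < 2 * (μ * |β|) := by positivity
  have key : |β| / (2*μ) * A^2 + μ / (2*|β|) * t^2 - A * t
      = (|β| * A - μ * t)^2 / (2 * (μ * |β|)) := by
    field_simp
    ring
  have hnn : 0 ≤ (|β| * A - μ * t)^2 / (2 * (μ * |β|)) :=
    div_nonneg (sq_nonneg _) h2.le
  rw [← ht2]
  linarith [key, hnn]


end
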